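/- The expected total delay D of an IoT mobile device is convex in its own offloading vector: ConvexOn ℝ S₀ D holds. -/

import Mathlib

open Finset

noncomputable section

/-- Total offloading fraction `s(α) = Σ_j α_j`. -/
def sTot {N : ℕ} (α : Fin N → ℝ) : ℝ := ∑ j, α j

/-- Local computing delay contribution. -/
def Gfun {N : ℕ} (lam c f : ℝ) (α : Fin N → ℝ) : ℝ :=
  (1 - sTot α) * c / (f - (1 - sTot α) * lam * c)

/-- Wireless transmission delay contribution. -/
def Hfun {N : ℕ} (lam z r Sbar : ℝ) (α : Fin N → ℝ) : ℝ :=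
  sTot α * (lam * Sbar * sTot α / (2 * (1 - lam * z * sTot α / r)) + z / r)

/-- Expected total delay. -/
def Dfun {N : ℕ} (Nc : ℕ) (lam c z r f Sbar : ℝ) (fOSP w K : Fin N → ℝ)
    (α : Fin N → ℝ) : ℝ :=
  Gfun lam c f α + Hfun lam z r Sbar α + (∑ j, α j * w j) +
    (∑ j ∈ Finset.univ.filter (fun j : Fin N => (j : ℕ) < Nc), α j * c / fOSP j) +
    (∑ j ∈ Finset.univ.filter (fun j : Fin N => Nc ≤ (j : ℕ)),
      α j * c / (fOSP j - K j - α j * lam * c))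

/-- Expected energy consumption. -/
def Efun {N : ℕ} (lam c z r f Sbar εloc εtx : ℝ) (α : Fin N → ℝ) : ℝ :=
  εloc * Gfun lam c f α + εtx * Hfun lam z r Sbar α

/-- Expected payment. -/
def Pfun {N : ℕ} (lam c : ℝ) (price : Fin N → ℝ) (α : Fin N → ℝ) : ℝ :=
  ∑ j, α j * price j * c * lam

/-- Basic feasible set `S₀`. -/
def S0 {N : ℕ} (Nc : ℕ) (lam c z r f : ℝ) (fOSP K : Fin N → ℝ) :
    Set (Fin N → ℝ) :=
  {α | (∀ j, 0 ≤ α j) ∧ sTot α ≤ 1 ∧ (1 - sTot α) * lam * c < f ∧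
    lam * z * sTot α < r ∧ ∀ j : Fin N, Nc ≤ (j : ℕ) → K j + α j * lam * c < fOSP j}


/-!
Every summand of `D` is a convex function of an affine function of `α`. The local and edge
terms have the queueing form `u / (F - u) = F / (F - u) - 1` in the load `u`, the transmission
term is a nonnegative multiple of `t ^ 2 / (1 - t) = 1 / (1 - t) - 1 - t` plus a linear term in
`t = λ z s / r`, and the remaining terms are linear; so everything reduces to the convexity of
`x ↦ 1 / x` on `(0, ∞)`. The feasible set `S₀` is cut out by affine inequalities, hence convex.
-/

open Set

theorem convexOn_inv_sub (b : ℝ) : ConvexOn ℝ (Iio b) fun x => (b - x)⁻¹ := by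
  have hinv : ConvexOn ℝ (Ioi 0) fun x : ℝ => x⁻¹ :=
    (convexOn_zpow (-1)).congr fun x _ => zpow_neg_one x
  refine ⟨convex_Iio b, fun x hx y hy a a' ha ha' haa' => ?_⟩
  have key := hinv.2 (mem_Ioi.2 (sub_pos.2 hx)) (mem_Ioi.2 (sub_pos.2 hy)) ha ha' haa'
  simp only [smul_eq_mul] at key ⊢
  convert key using 2
  linear_combination (-b) * haa'

theorem convexOn_div_sub {b : ℝ} (hb : 0 ≤ b) : ConvexOn ℝ (Iio b) fun x => x / (b - x) := by
  refine (((convexOn_inv_sub b).smul hb).add_const (-1)).congr fun x hx => ?_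
  have hbx : b - x ≠ 0 := (sub_pos.2 hx).ne'
  simp only [Pi.add_apply, smul_eq_mul]
  field_simp
  ring

theorem convexOn_sq_div_one_sub : ConvexOn ℝ (Iio (1 : ℝ)) fun x => x ^ 2 / (1 - x) := by
  have hlin : ConvexOn ℝ (Iio 1) fun x : ℝ => -x - 1 :=
    ((-LinearMap.id : ℝ →ₗ[ℝ] ℝ).convexOn (convex_Iio 1)).add_const (-1) |>.congr
      fun x _ => by simp [sub_eq_add_neg]
  refine ((convexOn_inv_sub 1).add hlin).congr fun x hx => ?_
  have h1x : 1 - x ≠ 0 := (sub_pos.2 hx).ne'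
  simp only [Pi.add_apply]
  field_simp
  ring

theorem convexOn_finset_sum {E ι : Type*} [AddCommGroup E] [Module ℝ E] {s : Set E}
    (hs : Convex ℝ s) (t : Finset ι) {f : ι → E → ℝ} (hf : ∀ i ∈ t, ConvexOn ℝ s (f i)) :
    ConvexOn ℝ s fun x => ∑ i ∈ t, f i x := by
  induction t using Finset.cons_induction with
  | empty => simpa using convexOn_const 0 hs
  | cons i t hi ih =>
    simp only [Finset.sum_cons]
    exact (hf i (t.mem_cons_self i)).add (ih fun j hj => hf j (Finset.mem_cons_of_mem hj))

theorem convexOn_finset_sum_comp_apply {ι : Type*} {s : Set (ι → ℝ)} (hs : Convex ℝ s)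
    (t : Finset ι) {u : ι → Set ℝ} {φ : ι → ℝ → ℝ} (hφ : ∀ i ∈ t, ConvexOn ℝ (u i) (φ i))
    (hsu : ∀ i ∈ t, MapsTo (fun x => x i) s (u i)) :
    ConvexOn ℝ s fun x => ∑ i ∈ t, φ i (x i) :=
  convexOn_finset_sum hs t fun i hi =>
    ((hφ i hi).comp_linearMap (LinearMap.proj (R := ℝ) (φ := fun _ => ℝ) i)).subset
      (fun _ hx => hsu i hi hx) hs

theorem convexOn_finset_sum_apply_mul {ι : Type*} {s : Set (ι → ℝ)} (hs : Convex ℝ s)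
    (t : Finset ι) (m : ι → ℝ) : ConvexOn ℝ s fun x => ∑ i ∈ t, x i * m i :=
  convexOn_finset_sum_comp_apply hs t (u := fun _ => univ)
    (fun i _ => (LinearMap.mulRight ℝ (m i)).convexOn convex_univ) fun _ _ _ _ => trivial

theorem convexOn_mul_div_sub_mul {lam F : ℝ} (hlam : 0 < lam) (hF : 0 ≤ F) (c : ℝ) :
    ConvexOn ℝ {x | x * (lam * c) < F} fun x => x * c / (F - x * lam * c) := by
  refine (((convexOn_div_sub hF).comp_linearMap (LinearMap.mulRight ℝ (lam * c))).smul
    (inv_nonneg.2 hlam.le)).congr fun x _ => ?_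
  simp only [Function.comp_apply, LinearMap.mulRight_apply, smul_eq_mul]
  field_simp

theorem convexOn_transmissionDelay {lam z r Sbar : ℝ} (hlam : 0 < lam) (hz : 0 < z) (hr : 0 < r)
    (hSbar : 0 ≤ Sbar) :
    ConvexOn ℝ {s | lam * z / r * s < 1}
      fun s => s * (lam * Sbar * s / (2 * (1 - lam * z * s / r)) + z / r) := by
  have hquad :=
    (convexOn_sq_div_one_sub.comp_linearMap (LinearMap.mulLeft ℝ (lam * z / r))).smul
      (by positivity : 0 ≤ Sbar * r ^ 2 / (2 * lam * z ^ 2))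
  have hlin := (LinearMap.mulLeft ℝ (z / r)).convexOn hquad.1
  refine (hquad.add hlin).congr fun s _ => ?_
  simp only [Pi.add_apply, Function.comp_apply, LinearMap.mulLeft_apply, smul_eq_mul]
  field_simp

def sTotLinearMap (N : ℕ) : (Fin N → ℝ) →ₗ[ℝ] ℝ where
  toFun := sTot
  map_add' x y := by simp [sTot, Finset.sum_add_distrib]
  map_smul' a x := by simp [sTot, Finset.mul_sum]

section FeasibleSet

variable {N : ℕ} (Nc : ℕ) {lam c z r f Sbar : ℝ} (fOSP K : Fin N → ℝ)

theorem convex_S0 : Convex ℝ (S0 Nc lam c z r f fOSP K) := by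
  rintro x ⟨hx0, hx1, hxG, hxH, hxE⟩ y ⟨hy0, hy1, hyG, hyH, hyE⟩ a b ha hb hab
  have hs : sTot (a • x + b • y) = a * sTot x + b * sTot y := by
    change sTotLinearMap N _ = a * sTotLinearMap N x + b * sTotLinearMap N y
    simp
  obtain rfl : b = 1 - a := by linarith
  refine ⟨fun j => ?_, ?_, ?_, ?_, fun j hj => ?_⟩ <;>
    simp only [Pi.add_apply, Pi.smul_apply, smul_eq_mul, hs]
  · exact add_nonneg (mul_nonneg ha (hx0 j)) (mul_nonneg hb (hy0 j))
  · nlinarith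
  · have := convex_Iio f hxG hyG ha hb hab
    simp only [smul_eq_mul, Set.mem_Iio] at this
    linarith
  · have := convex_Iio r hxH hyH ha hb hab
    simp only [smul_eq_mul, Set.mem_Iio] at this
    linarith
  · have := convex_Iio (fOSP j) (hxE j hj) (hyE j hj) ha hb hab
    simp only [smul_eq_mul, Set.mem_Iio] at this
    linarith

theorem convexOn_Gfun (hlam : 0 < lam) (hf : 0 < f) :
    ConvexOn ℝ (S0 Nc lam c z r f fOSP K) (Gfun lam c f) :=
  ((convexOn_mul_div_sub_mul hlam hf.le c).comp_affineMap
    (AffineMap.const ℝ (Fin N → ℝ) (1 : ℝ) - (sTotLinearMap N).toAffineMap)).subset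
    (fun α hα => show (1 - sTot α) * (lam * c) < f by rw [← mul_assoc]; exact hα.2.2.1)
    (convex_S0 Nc fOSP K)

theorem convexOn_Hfun (hlam : 0 < lam) (hz : 0 < z) (hr : 0 < r) (hSbar : 0 ≤ Sbar) :
    ConvexOn ℝ (S0 Nc lam c z r f fOSP K) (Hfun lam z r Sbar) :=
  ((convexOn_transmissionDelay hlam hz hr hSbar).comp_linearMap (sTotLinearMap N)).subset
    (fun α hα => show lam * z / r * sTot α < 1 by
      rw [div_mul_eq_mul_div, div_lt_one hr]; exact hα.2.2.2.1)
    (convex_S0 Nc fOSP K)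

theorem convexOn_edgeDelay (hlam : 0 < lam) (hK : ∀ j : Fin N, Nc ≤ (j : ℕ) → K j < fOSP j) :
    ConvexOn ℝ (S0 Nc lam c z r f fOSP K) fun α =>
      ∑ j ∈ Finset.univ.filter (fun j : Fin N => Nc ≤ (j : ℕ)),
        α j * c / (fOSP j - K j - α j * lam * c) := by
  refine convexOn_finset_sum_comp_apply (convex_S0 Nc fOSP K) _
    (fun j hj => convexOn_mul_div_sub_mul hlam (sub_nonneg.2 (hK j ?_).le) c)
    fun j hj α hα => ?_
  · simpa using hj
  · have := hα.2.2.2.2 j (by simpa using hj)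
    show α j * (lam * c) < fOSP j - K j
    linarith [mul_assoc (α j) lam c]

end FeasibleSet

theorem delay_convexOn_general (N Nc : ℕ)
    (lam c z r f Sbar : ℝ) (hlam : 0 < lam) (hz : 0 < z) (hr : 0 < r)
    (hf : 0 < f) (hSbar : 0 < Sbar)
    (fOSP w K : Fin N → ℝ)
    (hK : ∀ j : Fin N, Nc ≤ (j : ℕ) → 0 ≤ K j ∧ K j < fOSP j) :
    ConvexOn ℝ (S0 Nc lam c z r f fOSP K)
      (Dfun Nc lam c z r f Sbar fOSP w K) := by
  have hS : Convex ℝ (S0 Nc lam c z r f fOSP K) := convex_S0 Nc fOSP K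
  have hcloud := (convexOn_finset_sum_apply_mul hS
    (Finset.univ.filter fun j : Fin N => (j : ℕ) < Nc) fun j => c / fOSP j).congr
    fun α _ => Finset.sum_congr rfl fun j _ => (mul_div_assoc _ _ _).symm
  exact ((((convexOn_Gfun Nc fOSP K hlam hf).add
    (convexOn_Hfun Nc fOSP K hlam hz hr hSbar.le)).add
    (convexOn_finset_sum_apply_mul hS Finset.univ w)).add hcloud).add
    (convexOn_edgeDelay Nc fOSP K hlam fun j hj => (hK j hj).2)

/-- The expected total delay `D` is convex on the basic feasible set `S₀`. -/
theorem delay_convexOn (N Nc : ℕ) (hN : 1 ≤ N) (hNc : Nc ≤ N)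
    (lam c z r f Sbar : ℝ) (hlam : 0 < lam) (hc : 0 < c) (hz : 0 < z) (hr : 0 < r)
    (hf : 0 < f) (hSbar : 0 < Sbar)
    (fOSP w K : Fin N → ℝ)
    (hfOSP : ∀ j, 0 < fOSP j) (hw : ∀ j, 0 ≤ w j)
    (hK : ∀ j : Fin N, Nc ≤ (j : ℕ) → 0 ≤ K j ∧ K j < fOSP j) :
    ConvexOn ℝ (S0 Nc lam c z r f fOSP K)
      (Dfun Nc lam c z r f Sbar fOSP w K) :=
  delay_convexOn_general N Nc lam c z r f Sbar hlam hz hr hf hSbar fOSP w K hK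

end
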